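/- (Unbiasedness of the OME-IPS estimator.) Under the OME recommendation setup, suppose the estimated error rates are accurate, i.e. ρ̂01 = ρ01 and ρ̂10 = ρ10, and the learned propensities are accurate, i.e. p̂_{u,i} = p_{u,i} for every (u,i) ∈ D. Then the OME-IPS estimator is unbiased for the true prediction inaccuracy: E[ε_OME-IPS] = P*. -/

import Mathlib

open Finset

/-! With accurate propensities the inverse-propensity weight `o / p̂` has mean one, and with
accurate error rates the surrogate error `ẽ` has mean `ℓ(r*)` under the noisy rating
distribution. Since `o` and `r` are independent, the expectation of each summand is the product
of these two means, and linearity of expectation gives `P*`. -/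

/-- Expectation of a functional `g` of jointly independent families of Bernoulli random
variables `o d ~ Bernoulli (p d)` (observation indicators) and `r d ~ Bernoulli (q d)`
(observed ratings), encoded as a weighted sum over all realizations. -/
noncomputable def expectOR {D : Type*} [Fintype D] [DecidableEq D] (p q : D → ℝ)
    (g : (D → Bool) → (D → Bool) → ℝ) : ℝ :=
  ∑ o : D → Bool, ∑ r : D → Bool,
    ((∏ d, (if o d then p d else 1 - p d)) * (∏ d, (if r d then q d else 1 - q d))) * g o r

section ProductWeights

variable {ι α R : Type*} [Fintype ι] [DecidableEq ι] [Fintype α] [CommSemiring R]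

lemma sum_pi_prod_mul_apply (w : ι → α → R) (i : ι) (hw : ∀ j ≠ i, ∑ a, w j a = 1)
    (h : α → R) :
    ∑ f : ι → α, (∏ j, w j (f j)) * h (f i) = ∑ a, w i a * h a := by
  have hsplit (f : ι → α) :
      (∏ j, w j (f j)) * h (f i) = ∏ j, w j (f j) * if j = i then h (f j) else 1 := by
    rw [Finset.prod_mul_distrib, Finset.prod_ite_eq' Finset.univ i, if_pos (Finset.mem_univ i)]
  simp_rw [hsplit]
  rw [← Fintype.prod_sum fun j a => w j a * if j = i then h a else 1]
  refine (Fintype.prod_eq_single i fun j hj => ?_).trans (by simp)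
  simpa [hj] using hw j hj

end ProductWeights

def bernoulliWeight (p : ℝ) (b : Bool) : ℝ := if b then p else 1 - p

lemma sum_bernoulliWeight (p : ℝ) : ∑ b, bernoulliWeight p b = 1 := by
  simp [bernoulliWeight]

section Expectation

variable {D : Type*} [Fintype D] [DecidableEq D] (p q : D → ℝ)

lemma expectOR_const_mul_sum (c : ℝ) (g : D → (D → Bool) → (D → Bool) → ℝ) :
    expectOR p q (fun o r => c * ∑ d, g d o r) = c * ∑ d, expectOR p q (g d) := by
  simp only [expectOR, Finset.mul_sum]
  conv_rhs => rw [Finset.sum_comm]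
  refine Finset.sum_congr rfl fun o _ => ?_
  conv_rhs => rw [Finset.sum_comm]
  exact Finset.sum_congr rfl fun r _ => Finset.sum_congr rfl fun d _ => by ring

lemma expectOR_mul_apply (d : D) (X Y : Bool → ℝ) :
    expectOR p q (fun o r => X (o d) * Y (r d)) =
      (∑ b, bernoulliWeight (p d) b * X b) * ∑ c, bernoulliWeight (q d) c * Y c := by
  have hmarg (p : D → ℝ) (h : Bool → ℝ) :
      ∑ f : D → Bool, (∏ e, (if f e then p e else 1 - p e)) * h (f d) =
        ∑ b, bernoulliWeight (p d) b * h b :=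
    sum_pi_prod_mul_apply (fun e => bernoulliWeight (p e)) d
      (fun e _ => sum_bernoulliWeight (p e)) h
  rw [← hmarg, ← hmarg, Finset.sum_mul_sum, expectOR]
  refine Finset.sum_congr rfl fun o _ => Finset.sum_congr rfl fun r _ => ?_
  ring

end Expectation

lemma sum_bernoulliWeight_mul_indicator_div_self {p : ℝ} (hp : p ≠ 0) :
    ∑ b, bernoulliWeight p b * ((if b then (1 : ℝ) else 0) / p) = 1 := by
  simp [bernoulliWeight, hp]

/-- The unbiased surrogate `ℓ̃` of a loss `ℓ` under label noise with flip rates `ρ01` (from `1`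
to `0`) and `ρ10` (from `0` to `1`). -/
noncomputable def surrogateLoss (ρ01 ρ10 : ℝ) (ℓ : Bool → ℝ) (b : Bool) : ℝ :=
  if b then ((1 - ρ10) * ℓ true - ρ01 * ℓ false) / (1 - ρ01 - ρ10)
  else ((1 - ρ01) * ℓ false - ρ10 * ℓ true) / (1 - ρ01 - ρ10)

lemma sum_bernoulliWeight_mul_surrogateLoss {ρ01 ρ10 : ℝ} (hρ : ρ01 + ρ10 ≠ 1) (ℓ : Bool → ℝ) (rstar : Bool) :
    ∑ c, bernoulliWeight (if rstar then 1 - ρ01 else ρ10) c * surrogateLoss ρ01 ρ10 ℓ c =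
      ℓ rstar := by
  have hΔ : 1 - ρ01 - ρ10 ≠ 0 := fun h => hρ (by linarith)
  cases rstar <;>
  · simp only [Fintype.sum_bool, bernoulliWeight, surrogateLoss, Bool.false_eq_true, ↓reduceIte]
    field_simp
    ring

theorem unbiasedness_OME_IPS_general {D : Type*} [Fintype D] [DecidableEq D]
    (rstar : D → Bool) (l : D → Bool → ℝ) (p phat : D → ℝ)
    (ρ01 ρ10 ρh01 ρh10 : ℝ)
    (hp0 : ∀ d, 0 < p d)
    (hhsum : ρh01 + ρh10 < 1)
    (hacc01 : ρh01 = ρ01) (hacc10 : ρh10 = ρ10)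
    (haccp : ∀ d, phat d = p d) :
    expectOR p (fun d => if rstar d then 1 - ρ01 else ρ10)
        (fun o r => (1 / (Fintype.card D : ℝ)) * ∑ d,
          ((if o d then (1 : ℝ) else 0) / phat d) *
            (if r d then ((1 - ρh10) * l d true - ρh01 * l d false) / (1 - ρh01 - ρh10)
             else ((1 - ρh01) * l d false - ρh10 * l d true) / (1 - ρh01 - ρh10))) =
      (1 / (Fintype.card D : ℝ)) * ∑ d, l d (rstar d) := by
  subst hacc01 hacc10
  rw [expectOR_const_mul_sum]
  congr 1
  refine Finset.sum_congr rfl fun d _ => ?_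
  refine (expectOR_mul_apply p _ d (fun b => (if b then 1 else 0) / phat d)
    (surrogateLoss ρh01 ρh10 (l d))).trans ?_
  rw [haccp, sum_bernoulliWeight_mul_indicator_div_self (hp0 d).ne',
    sum_bernoulliWeight_mul_surrogateLoss hhsum.ne, one_mul]

/-- **Unbiasedness of the OME-IPS estimator.** Under the OME
recommendation setup, if the estimated error rates are accurate (`ρh01 = ρ01`,
`ρh10 = ρ10`) and the learned propensities are accurate (`phat d = p d` for all `d`),
then the OME-IPS estimator is unbiased: `E[ε_OME-IPS] = P*`. -/
theorem unbiasedness_OME_IPS {D : Type*} [Fintype D] [DecidableEq D] [Nonempty D]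
    (rstar : D → Bool) (l : D → Bool → ℝ) (p phat : D → ℝ)
    (ρ01 ρ10 ρh01 ρh10 : ℝ)
    (hp0 : ∀ d, 0 < p d) (hp1 : ∀ d, p d ≤ 1) (hphat : ∀ d, 0 < phat d)
    (h01 : 0 ≤ ρ01) (h10 : 0 ≤ ρ10) (hsum : ρ01 + ρ10 < 1)
    (hh01 : 0 ≤ ρh01) (hh10 : 0 ≤ ρh10) (hhsum : ρh01 + ρh10 < 1)
    (hacc01 : ρh01 = ρ01) (hacc10 : ρh10 = ρ10)
    (haccp : ∀ d, phat d = p d) :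
    expectOR p (fun d => if rstar d then 1 - ρ01 else ρ10)
        (fun o r => (1 / (Fintype.card D : ℝ)) * ∑ d,
          ((if o d then (1 : ℝ) else 0) / phat d) *
            (if r d then ((1 - ρh10) * l d true - ρh01 * l d false) / (1 - ρh01 - ρh10)
             else ((1 - ρh01) * l d false - ρh10 * l d true) / (1 - ρh01 - ρh10))) =
      (1 / (Fintype.card D : ℝ)) * ∑ d, l d (rstar d) :=
  unbiasedness_OME_IPS_general rstar l p phat ρ01 ρ10 ρh01 ρh10 hp0 hhsum hacc01 hacc10 haccp
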